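/- In an atomistic complete lattice with a left-continuous t-norm T, for every subset S ⊆ L one has A(⋁S) = ⋃_{x∈S} A(x), where A(x) is the set of atoms below x; consequently the map x ↦ A(x) is an order isomorphism from L to the powerset of A(L). -/

import Mathlib

/-!
Since `T ≤ ⊓`, for an atom `a` the value `T a x` is nonzero only if `a ≤ x`. In an atomistic
lattice `⊤` is the join of the atoms, so left-continuity gives `a = T a ⊤ = ⨆ b, T a b` over
atoms `b`, and only `b = a` can contribute: every atom is `T`-idempotent. Then an atom
`a ≤ ⋁ S` satisfies `a = T a a ≤ T a (⋁ S) = ⨆ s ∈ S, T a s`, so `T a s ≠ ⊥`, hence `a ≤ s`,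
for some `s ∈ S`: atoms are completely join-prime. In an atomistic lattice this is exactly
what makes `x ↦ A(x)` a bijection onto the subsets of atoms.
-/

def IsTnorm {L : Type*} [PartialOrder L] [BoundedOrder L] (T : L → L → L) : Prop :=
  (∀ x : L, Monotone (T x)) ∧ (∀ x y : L, T x y = T y x) ∧
  (∀ x y z : L, T x (T y z) = T (T x y) z) ∧ (∀ x : L, T x ⊤ = x)

open Classical in
noncomputable def TD {L : Type*} [Lattice L] [BoundedOrder L] (x y : L) : L :=
  if x = ⊤ ∨ y = ⊤ then x ⊓ y else ⊥

def LeftCts {L : Type*} [CompleteLattice L] (T : L → L → L) : Prop :=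
  ∀ a : L, ∀ S : Set L, T a (sSup S) = ⨆ s ∈ S, T a s

def AtomsCompletelySupPrime (L : Type*) [CompleteLattice L] : Prop :=
  ∀ a : L, IsAtom a → ∀ S : Set L, a ≤ sSup S → ∃ s ∈ S, a ≤ s

section AtomsCompletelySupPrime

variable {L : Type*} [CompleteLattice L]

theorem setOf_isAtom_le_sSup_eq_iUnion (hprime : AtomsCompletelySupPrime L) (S : Set L) :
    {a : L | IsAtom a ∧ a ≤ sSup S} = ⋃ x ∈ S, {a : L | IsAtom a ∧ a ≤ x} := by
  ext a
  simp only [Set.mem_ofPred_eq, Set.mem_iUnion, exists_prop]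
  constructor
  · rintro ⟨ha, haS⟩
    obtain ⟨x, hx, hax⟩ := hprime a ha S haS
    exact ⟨x, hx, ha, hax⟩
  · rintro ⟨x, hx, ha, hax⟩
    exact ⟨ha, hax.trans (le_sSup hx)⟩

def orderIsoSetAtoms [IsAtomistic L] (hprime : AtomsCompletelySupPrime L) :
    L ≃o Set {a : L // IsAtom a} where
  toFun x := {a | (a : L) ≤ x}
  invFun s := sSup (Subtype.val '' s)
  left_inv x := by simp [Subtype.coe_image]
  right_inv s := by
    ext a
    refine ⟨fun ha => ?_, fun ha => le_sSup ⟨a, ha, rfl⟩⟩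
    obtain ⟨_, ⟨b, hb, rfl⟩, hab⟩ := hprime a a.2 _ ha
    obtain rfl : a = b := Subtype.ext ((b.2.le_iff.mp hab).resolve_left a.2.1)
    exact hb
  map_rel_iff' {x y} := by simpa using le_iff_atom_le_imp.symm

theorem mem_orderIsoSetAtoms [IsAtomistic L]
    (hprime : AtomsCompletelySupPrime L) {x : L} {a : {a : L // IsAtom a}} :
    a ∈ orderIsoSetAtoms hprime x ↔ (a : L) ≤ x :=
  Iff.rfl

end AtomsCompletelySupPrime

section Tnorm

variable {L : Type*} [CompleteLattice L] {T : L → L → L}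

theorem IsTnorm.apply_le_inf (hT : IsTnorm T) (x y : L) : T x y ≤ x ⊓ y := by
  obtain ⟨hmono, hcomm, -, htop⟩ := hT
  refine le_inf ?_ ?_
  · simpa only [htop] using hmono x (le_top : y ≤ ⊤)
  · simpa only [hcomm x y, htop] using hmono y (le_top : x ≤ ⊤)

theorem IsAtom.le_of_tnorm_ne_bot (hT : IsTnorm T) {a x : L} (ha : IsAtom a)
    (h : T a x ≠ ⊥) : a ≤ x := by
  refine ha.not_disjoint_iff_le.mp fun hdisj => h ?_
  exact le_bot_iff.mp ((hT.apply_le_inf a x).trans (disjoint_iff.mp hdisj).le)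

theorem LeftCts.exists_tnorm_ne_bot (hlc : LeftCts T) {a : L} {S : Set L}
    (h : T a (sSup S) ≠ ⊥) : ∃ s ∈ S, T a s ≠ ⊥ := by
  by_contra! hS
  exact h ((hlc a S).trans (iSup₂_eq_bot.mpr hS))

theorem LeftCts.tnorm_self_of_isAtom [IsAtomistic L] (hT : IsTnorm T) (hlc : LeftCts T)
    {a : L} (ha : IsAtom a) : T a a = a := by
  have htop : T a (sSup {b : L | IsAtom b}) ≠ ⊥ := by
    simpa only [sSup_atoms_eq_top, hT.2.2.2] using ha.1
  obtain ⟨b, hb, hab⟩ := hlc.exists_tnorm_ne_bot htop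
  obtain rfl : a = b := (hb.le_iff.mp (ha.le_of_tnorm_ne_bot hT hab)).resolve_left ha.1
  exact (ha.le_iff.mp ((hT.apply_le_inf a a).trans inf_le_left)).resolve_left hab

theorem LeftCts.atomsCompletelySupPrime [IsAtomistic L] (hT : IsTnorm T) (hlc : LeftCts T) :
    AtomsCompletelySupPrime L := by
  intro a ha S haS
  have h : T a (sSup S) ≠ ⊥ := by
    refine ne_bot_of_le_ne_bot ha.1 ?_
    calc a = T a a := (hlc.tnorm_self_of_isAtom hT ha).symm
      _ ≤ T a (sSup S) := hT.1 a haS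
  obtain ⟨s, hs, has⟩ := hlc.exists_tnorm_ne_bot h
  exact ⟨s, hs, ha.le_of_tnorm_ne_bot hT has⟩

end Tnorm

theorem stmt14 {L : Type*} [CompleteLattice L] [IsAtomistic L]
    (T : L → L → L) (hT : IsTnorm T) (hlc : LeftCts T) :
    (∀ S : Set L,
      {a : L | IsAtom a ∧ a ≤ sSup S} = ⋃ x ∈ S, {a : L | IsAtom a ∧ a ≤ x}) ∧
    ∃ e : L ≃o Set {a : L // IsAtom a},
      ∀ (x : L) (a : {a : L // IsAtom a}), a ∈ e x ↔ (a : L) ≤ x := by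
  have hprime := hlc.atomsCompletelySupPrime hT
  exact ⟨setOf_isAtom_le_sSup_eq_iUnion hprime,
    orderIsoSetAtoms hprime, fun _ _ => mem_orderIsoSetAtoms hprime⟩
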